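/- With the Witt algebra representation ρ_{α,β} on K[z,z^{-1}] (K of characteristic zero), the restriction to sl₂ = span{ξ_{-1}, ξ_0, ξ_1} contains a nonzero finite-dimensional sl₂-submodule if and only if 2α ∈ ℤ, α ≤ 0 (as a half-integer), and α + β ∈ ℤ. When these conditions hold, the finite-dimensional submodule is unique and has dimension -2α + 1. -/

import Mathlib

/-!
`ρ 0` acts diagonally on the monomials `T j`, with pairwise distinct eigenvalues `j + β`, so a
`ρ 0`-invariant subspace `V` is spanned by the monomials it contains. If `V` is finite-dimensional,
the set `S` of their exponents is finite; since `ρ (±1) (T j)` is a multiple of `T (j ± 1)`, the set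
`S` can end only where the coefficient `j ± α + β` vanishes. Hence `S` is an interval `[j₀, j₁]`
with `j₁ + α + β = 0 = j₀ - α + β`, i.e. `2α = j₀ - j₁ ∈ -ℕ` and `α + β = -j₁ ∈ ℤ`; these
equations pin down `S`, hence `V`, whose dimension is `j₁ - j₀ + 1 = -2α + 1`.
-/

open LaurentPolynomial Submodule

namespace Submodule

variable {ι K M : Type*} [Field K] [AddCommGroup M] [Module K M]
  {f : Module.End K M} {p : Submodule K M} {v : ι → M} {μ : ι → K}

theorem smul_mem_of_sum_smul_eigenvectors_mem (hp : ∀ x ∈ p, f x ∈ p) (hv : ∀ i, f (v i) = μ i • v i)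
    {s : Finset ι} (hμ : Set.InjOn μ s) (c : ι → K) (hs : ∑ i ∈ s, c i • v i ∈ p) :
    ∀ i ∈ s, c i • v i ∈ p := by
  classical
  induction s using Finset.induction_on generalizing c with
  | empty => simp
  | insert k s hks ih =>
    rw [Finset.coe_insert, Set.injOn_insert hks] at hμ
    rw [Finset.sum_insert hks] at hs
    have hrest : ∀ i ∈ s, c i • v i ∈ p := by
      -- `f - μ k` kills the `k`-th component and rescales the others by `μ i - μ k ≠ 0`.
      have hshift : f (c k • v k + ∑ i ∈ s, c i • v i) - μ k • (c k • v k + ∑ i ∈ s, c i • v i)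
          = ∑ i ∈ s, ((μ i - μ k) * c i) • v i := by
        simp only [map_add, map_sum, map_smul, hv, smul_add, Finset.smul_sum, smul_smul,
          sub_mul, sub_smul, Finset.sum_sub_distrib, mul_comm (μ _) (c _)]
        abel
      intro i hi
      have hne : μ i - μ k ≠ 0 := sub_ne_zero.mpr fun h => hμ.2 ⟨i, hi, h⟩
      have := ih hμ.1 _ (hshift ▸ p.sub_mem (hp _ hs) (p.smul_mem _ hs)) i hi
      rwa [mul_smul, p.smul_mem_iff hne] at this
    intro i hi
    rcases Finset.mem_insert.mp hi with rfl | hi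
    · simpa using p.sub_mem hs (p.sum_mem hrest)
    · exact hrest i hi

theorem eq_span_image_eigenbasis (b : Module.Basis ι K M) (hμ : Function.Injective μ)
    (hb : ∀ i, f (b i) = μ i • b i) (hp : ∀ x ∈ p, f x ∈ p) :
    p = span K (b '' {i | b i ∈ p}) := by
  refine le_antisymm (fun x hx => ?_) (span_le.mpr <| by rintro _ ⟨i, hi, rfl⟩; exact hi)
  have hx' := b.linearCombination_repr x
  rw [Finsupp.linearCombination_apply, Finsupp.sum] at hx'
  have hcomp := smul_mem_of_sum_smul_eigenvectors_mem hp hb hμ.injOn (b.repr x) (hx' ▸ hx)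
  rw [← hx']
  refine sum_mem fun i hi => smul_mem _ _ (subset_span ⟨i, ?_, rfl⟩)
  exact (p.smul_mem_iff (Finsupp.mem_support_iff.mp hi)).mp (hcomp i hi)

end Submodule

namespace LaurentPolynomial

variable {K : Type*} [Field K]

theorem T_mem_span_image_T {s : Set ℤ} {n : ℤ} :
    (T n : K[T;T⁻¹]) ∈ span K (T '' s) ↔ n ∈ s :=
  AddMonoidAlgebra.single_mem_span_single

theorem finrank_span_image_T_Icc (a b : ℤ) :
    Module.finrank K (span K (T '' Set.Icc a b : Set K[T;T⁻¹])) = (b + 1 - a).toNat := by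
  have hli : LinearIndependent K (T ∘ Subtype.val : Set.Icc a b → K[T;T⁻¹]) :=
    (AddMonoidAlgebra.basis ℤ K).linearIndependent.comp _ Subtype.val_injective
  rw [← Int.card_Icc, ← Fintype.card_Icc, ← finrank_span_eq_card hli, Set.range_comp,
    Subtype.range_coe]

theorem finite_setOf_T_mem (V : Submodule K K[T;T⁻¹]) [FiniteDimensional K V] :
    {j | (T j : K[T;T⁻¹]) ∈ V}.Finite := by
  have hli : LinearIndependent K (fun j : {j | T j ∈ V} => (⟨T j, j.2⟩ : V)) :=
    ((AddMonoidAlgebra.basis ℤ K).linearIndependent.comp _ Subtype.val_injective).of_comp V.subtype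
  exact Set.finite_coe_iff.mp hli.finite

end LaurentPolynomial

section Combinatorics

variable {K : Type*} [Field K] [CharZero K] {α β : K}

/- `S` stands for the exponents of the monomials in an invariant subspace: `ρ 1` and `ρ (-1)`
may leave `S` only where their coefficient on `T j` vanishes. -/
theorem exists_eq_Icc_of_closed {S : Set ℤ} (hfin : S.Finite) (hne : S.Nonempty)
    (hup : ∀ j ∈ S, (j : K) + α + β = 0 ∨ 1 + j ∈ S)
    (hdown : ∀ j ∈ S, (j : K) - α + β = 0 ∨ -1 + j ∈ S) :
    ∃ m : ℕ, ∃ a : ℤ, α = -(m : K) / 2 ∧ α + β = a ∧ S = Set.Icc (-a - m) (-a) := by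
  obtain ⟨top, htop, hle_top⟩ := Set.exists_max_image S id hfin hne
  obtain ⟨bot, hbot, hbot_le⟩ := Set.exists_min_image S id hfin hne
  have htop_eq : (top : K) + α + β = 0 :=
    (hup top htop).resolve_right fun h => by have := hle_top _ h; simp at this
  have hbot_eq : (bot : K) - α + β = 0 :=
    (hdown bot hbot).resolve_right fun h => by have := hbot_le _ h; simp at this
  have hIcc : Set.Icc bot top ⊆ S := by
    rintro j ⟨hbj, hjt⟩
    induction j, hbj using Int.leInduction with
    | base => exact hbot
    | succ j hbj ih =>
      have hj : j ∈ S := ih (by omega)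
      refine add_comm j 1 ▸ (hup j hj).resolve_left fun h => ?_
      have : (j : K) = top := by linear_combination h - htop_eq
      exact absurd (Int.cast_injective this) (by omega)
  obtain ⟨m, hm⟩ : ∃ m : ℕ, top - bot = m :=
    Int.eq_ofNat_of_zero_le (sub_nonneg.mpr (hle_top bot hbot))
  have hmK : (m : K) = top - bot := by exact_mod_cast hm.symm
  refine ⟨m, -top, by linear_combination hmK / 2 + (htop_eq - hbot_eq) / 2,
    by push_cast; linear_combination htop_eq, ?_⟩
  rw [neg_neg, show top - m = bot by omega]
  exact Set.Subset.antisymm (fun j hj => ⟨hbot_le j hj, hle_top j hj⟩) hIcc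

end Combinatorics

section WittRepresentation

variable {K : Type*} [Field K] {α β : K}
  {ρ : ℤ → K[T;T⁻¹] →ₗ[K] K[T;T⁻¹]}

theorem rho_T_mem_span_image_T_iff
    (hρ : ∀ i j : ℤ, ρ i (T j) = ((j : K) + α * (i : K) + β) • T (i + j)) (s : Set ℤ) (i j : ℤ) :
    ρ i (T j) ∈ span K (T '' s) ↔ (j : K) + α * i + β = 0 ∨ i + j ∈ s := by
  rw [hρ]
  by_cases h : (j : K) + α * i + β = 0
  · simp [h]
  · rw [smul_mem_iff _ h, T_mem_span_image_T]
    simp [h]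

theorem rho_mem_span_image_T
    (hρ : ∀ i j : ℤ, ρ i (T j) = ((j : K) + α * (i : K) + β) • T (i + j)) {s : Set ℤ} {i : ℤ}
    (hs : ∀ j ∈ s, (j : K) + α * i + β = 0 ∨ i + j ∈ s) :
    ∀ v ∈ span K (T '' s), ρ i v ∈ span K (T '' s) := by
  have : span K (T '' s) ≤ (span K (T '' s)).comap (ρ i) := span_le.mpr <| by
    rintro _ ⟨j, hj, rfl⟩
    exact (rho_T_mem_span_image_T_iff hρ s i j).mpr (hs j hj)
  exact fun v hv => this hv

theorem eq_span_image_T_setOf_T_mem [CharZero K]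
    (hρ : ∀ i j : ℤ, ρ i (T j) = ((j : K) + α * (i : K) + β) • T (i + j))
    {V : Submodule K K[T;T⁻¹]} (hV : ∀ v ∈ V, ρ 0 v ∈ V) :
    V = span K (T '' {j | T j ∈ V}) :=
  eq_span_image_eigenbasis (AddMonoidAlgebra.basis ℤ K) (μ := fun j : ℤ => (j : K) + β)
    (fun j k h => Int.cast_injective (add_right_cancel h)) (fun j => by simpa using hρ 0 j) hV

theorem exists_eq_span_image_T_Icc [CharZero K]
    (hρ : ∀ i j : ℤ, ρ i (T j) = ((j : K) + α * (i : K) + β) • T (i + j))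
    {V : Submodule K K[T;T⁻¹]} (hbot : V ≠ ⊥) [FiniteDimensional K V]
    (hV : ∀ v ∈ V, ρ 1 v ∈ V ∧ ρ 0 v ∈ V ∧ ρ (-1) v ∈ V) :
    ∃ m : ℕ, ∃ a : ℤ, α = -(m : K) / 2 ∧ α + β = a ∧ V = span K (T '' Set.Icc (-a - m) (-a)) := by
  set S := {j | (T j : K[T;T⁻¹]) ∈ V}
  have hVS : V = span K (T '' S) := eq_span_image_T_setOf_T_mem hρ fun v hv => (hV v hv).2.1
  have hne : S.Nonempty := Set.nonempty_iff_ne_empty.mpr fun h =>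
    hbot (by rw [hVS, h, Set.image_empty, span_empty])
  have hstep (i : ℤ) (hi : ∀ v ∈ V, ρ i v ∈ V) (j : ℤ) (hj : j ∈ S) :
      (j : K) + α * i + β = 0 ∨ i + j ∈ S :=
    (rho_T_mem_span_image_T_iff hρ S i j).mp (hVS ▸ hi _ hj)
  obtain ⟨m, a, hm, ha, hSIcc⟩ := exists_eq_Icc_of_closed (finite_setOf_T_mem V) hne
    (by simpa only [Int.cast_one, mul_one] using hstep 1 fun v hv => (hV v hv).1)
    (by simpa only [Int.cast_neg, Int.cast_one, mul_neg, mul_one, ← sub_eq_add_neg]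
      using hstep (-1) fun v hv => (hV v hv).2.2)
  exact ⟨m, a, hm, ha, hSIcc ▸ hVS⟩

theorem span_image_T_Icc_invariant [CharZero K]
    (hρ : ∀ i j : ℤ, ρ i (T j) = ((j : K) + α * (i : K) + β) • T (i + j))
    {m : ℕ} {a : ℤ} (hm : α = -(m : K) / 2) (ha : α + β = a)
    {V : Submodule K K[T;T⁻¹]} (hV : V = span K (T '' Set.Icc (-a - m) (-a))) :
    V ≠ ⊥ ∧ FiniteDimensional K V ∧ ∀ v ∈ V, ρ 1 v ∈ V ∧ ρ 0 v ∈ V ∧ ρ (-1) v ∈ V := by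
  subst hV
  have h2α : 2 * α = -m := by rw [hm]; field_simp
  refine ⟨(Submodule.ne_bot_iff _).mpr ⟨T (-a), subset_span ⟨-a, ⟨by omega, le_rfl⟩, rfl⟩,
      (isUnit_T (-a)).ne_zero⟩,
    FiniteDimensional.span_of_finite K ((Set.finite_Icc _ _).image T),
    fun v hv => ⟨rho_mem_span_image_T hρ ?_ v hv, rho_mem_span_image_T hρ ?_ v hv,
      rho_mem_span_image_T hρ ?_ v hv⟩⟩
  · rintro j ⟨hj₁, hj₂⟩
    rcases eq_or_ne j (-a) with rfl | hj
    · left; push_cast; linear_combination ha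
    · right; exact ⟨by omega, by omega⟩
  · exact fun j hj => Or.inr (by simpa using hj)
  · rintro j ⟨hj₁, hj₂⟩
    rcases eq_or_ne j (-a - m) with rfl | hj
    · left; push_cast; linear_combination ha - h2α
    · right; exact ⟨by omega, by omega⟩

end WittRepresentation

open LaurentPolynomial in
/-- `V_{α,β}` restricted to `sl₂ = span{ξ₋₁, ξ₀, ξ₁}` contains a nonzero
finite-dimensional submodule iff `α` is a non-positive half-integer and `α + β ∈ ℤ`;
in that case the submodule is unique and has dimension `-2α + 1`. -/
theorem finite_submodule_iff (K : Type*) [Field K] [CharZero K] (α β : K)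
    (ρ : ℤ → LaurentPolynomial K →ₗ[K] LaurentPolynomial K)
    (hρ : ∀ i j : ℤ, ρ i (T j) = ((j : K) + α * (i : K) + β) • T (i + j)) :
    ((∃ V : Submodule K (LaurentPolynomial K), V ≠ ⊥ ∧ FiniteDimensional K V ∧
        ∀ v ∈ V, ρ 1 v ∈ V ∧ ρ 0 v ∈ V ∧ ρ (-1) v ∈ V) ↔
      ((∃ m : ℕ, α = -(m : K) / 2) ∧ ∃ a : ℤ, α + β = (a : K))) ∧
    (∀ m : ℕ, α = -(m : K) / 2 → (∃ a : ℤ, α + β = (a : K)) →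
      (∃! V : Submodule K (LaurentPolynomial K), V ≠ ⊥ ∧ FiniteDimensional K V ∧
          ∀ v ∈ V, ρ 1 v ∈ V ∧ ρ 0 v ∈ V ∧ ρ (-1) v ∈ V) ∧
        ∀ V : Submodule K (LaurentPolynomial K),
          (V ≠ ⊥ ∧ FiniteDimensional K V ∧
            ∀ v ∈ V, ρ 1 v ∈ V ∧ ρ 0 v ∈ V ∧ ρ (-1) v ∈ V) →
          Module.finrank K V = m + 1) := by
  refine ⟨⟨fun ⟨V, hbot, _, hV⟩ => ?_,
    fun ⟨⟨m, hm⟩, a, ha⟩ => ⟨_, span_image_T_Icc_invariant hρ hm ha rfl⟩⟩, fun m hm ⟨a, ha⟩ => ?_⟩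
  · obtain ⟨m, a, hm, ha, -⟩ := exists_eq_span_image_T_Icc hρ hbot hV
    exact ⟨⟨m, hm⟩, a, ha⟩
  have huniq : ∀ V : Submodule K K[T;T⁻¹], (V ≠ ⊥ ∧ FiniteDimensional K V ∧
      ∀ v ∈ V, ρ 1 v ∈ V ∧ ρ 0 v ∈ V ∧ ρ (-1) v ∈ V) →
      V = span K (T '' Set.Icc (-a - m) (-a)) := by
    rintro V ⟨hbot, _, hV⟩
    obtain ⟨m', a', hm', ha', rfl⟩ := exists_eq_span_image_T_Icc hρ hbot hV
    have hmm' := hm'.symm.trans hm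
    rw [div_left_inj' two_ne_zero, neg_inj] at hmm'
    obtain rfl : m' = m := Nat.cast_injective hmm'
    obtain rfl : a' = a := Int.cast_injective (α := K) (ha'.symm.trans ha)
    rfl
  refine ⟨⟨_, span_image_T_Icc_invariant hρ hm ha rfl, huniq⟩, fun V hV => ?_⟩
  rw [huniq V hV, finrank_span_image_T_Icc]
  omega
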